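/- arXiv:1112.6142 — 3 statements merged into one kernel-verified Lean document; each statement's English description precedes it below -/
import Mathlib

section
/- Let α₁ = 1/(φ+2). For every integer N ≥ 4, min_{1 ≤ n ≤ N} ‖F_n α₁‖ = (φ−1)/(φ+2). -/
/-!
Since `5 / (φ + 2) = 3 - φ` and `F (n + 1) - φ F n = ψ ^ n` with `ψ = 1 - φ`, we get
`5 F n / (φ + 2) = j + ψ ^ n` for the integer `j = 3 F n - F (n + 1)`, and `j ≡ -3 ^ n (mod 5)`
because `X ^ 2 - X - 1 ≡ (X - 3) ^ 2 (mod 5)`. Hence `‖F n / (φ + 2)‖ = |k + ψ ^ n| / 5` for some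
`k ≡ -3 ^ n (mod 5)`, so `k ≠ 0`. As `|ψ| < 1`, `|k + ψ ^ n| ≥ 1` unless `k = ±1`; `k = 1` forces
`n` even, so `ψ ^ n > 0`, and `k = -1` forces `4 ∣ n`, so `ψ ^ n ≤ ψ ^ 4`. The resulting bound
`(1 - ψ ^ 4) / 5 = (φ - 1) / (φ + 2)` is attained at `n = 4`.
-/

/-- Distance from a real number to the nearest integer. -/
noncomputable def distNearestInt (x : ℝ) : ℝ := |x - round x|

/-- The golden ratio. -/
noncomputable def φ : ℝ := (1 + Real.sqrt 5) / 2

local notation "ψ" => Real.goldenConj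

lemma phi_eq_goldenRatio : φ = Real.goldenRatio := rfl

lemma phi_add_two_pos : 0 < φ + 2 := by
  rw [phi_eq_goldenRatio]; linarith [Real.goldenRatio_pos]

lemma fib_mul_one_div_phi_add_two (n : ℕ) :
    Nat.fib n * (1 / (φ + 2)) = (((3 * Nat.fib n - Nat.fib (n + 1) : ℤ) : ℝ) + ψ ^ n) / 5 := by
  have := phi_add_two_pos.ne'
  field_simp
  push_cast
  rw [phi_eq_goldenRatio]
  linear_combination (Real.goldenRatio + 2) * Real.fib_succ_sub_goldenRatio_mul_fib n
    + Nat.fib n * Real.goldenRatio_sq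

lemma phi_sub_one_div_phi_add_two : (φ - 1) / (φ + 2) = (1 - ψ ^ 4) / 5 := by
  rw [div_eq_div_iff phi_add_two_pos.ne' (by norm_num), phi_eq_goldenRatio,
    ← Real.one_sub_goldenConj]
  linear_combination (-ψ ^ 3 + 2 * ψ ^ 2 + ψ + 3) * Real.goldenConj_sq

lemma abs_goldenConj_le_one : |ψ| ≤ 1 :=
  abs_le.2 ⟨Real.neg_one_lt_goldenConj.le, by linarith [Real.goldenConj_neg]⟩

lemma abs_goldenConj_pow_le_one (n : ℕ) : |ψ ^ n| ≤ 1 := by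
  rw [abs_pow]; exact pow_le_one₀ (abs_nonneg _) abs_goldenConj_le_one

lemma fib_succ_zmod_five (n : ℕ) : (Nat.fib (n + 1) : ZMod 5) = 3 * Nat.fib n + 3 ^ n := by
  induction n using Nat.twoStepInduction with
  | zero => decide
  | one => decide
  | more n _ ih =>
    rw [Nat.fib_add_two, Nat.cast_add, ih]
    ring_nf
    reduce_mod_char

lemma three_mul_fib_sub_fib_succ_zmod_five (n : ℕ) :
    ((3 * Nat.fib n - Nat.fib (n + 1) : ℤ) : ZMod 5) = -3 ^ n := by
  push_cast
  rw [fib_succ_zmod_five]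
  ring

lemma orderOf_three_zmod_five : orderOf (3 : ZMod 5) = 4 :=
  orderOf_eq_prime_pow (p := 2) (n := 1) (by decide) (by decide)

lemma three_pow_zmod_five_eq_one_iff {n : ℕ} : (3 : ZMod 5) ^ n = 1 ↔ 4 ∣ n := by
  rw [← orderOf_three_zmod_five, orderOf_dvd_iff_pow_eq_one]

lemma even_of_neg_three_pow_zmod_five_eq_one {n : ℕ} (h : -(3 : ZMod 5) ^ n = 1) : Even n := by
  have h4 : 4 ∣ n + 2 := by
    rw [← three_pow_zmod_five_eq_one_iff, pow_add, ← neg_neg ((3 : ZMod 5) ^ n), h]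
    decide
  exact Nat.even_iff.2 (by omega)

lemma three_pow_zmod_five_ne_zero (n : ℕ) : (3 : ZMod 5) ^ n ≠ 0 := by
  have : Fact (1 < 5) := ⟨by norm_num⟩
  exact ((isUnit_iff_exists_inv.2 ⟨2, by decide⟩ : IsUnit (3 : ZMod 5)).pow n).ne_zero

lemma le_distNearestInt_int_add_div {q : ℕ} (j : ℤ) (e c : ℝ)
    (h : ∀ k : ℤ, (k : ZMod q) = j → c ≤ |k + e|) : c / q ≤ distNearestInt ((j + e) / q) := by
  rcases Nat.eq_zero_or_pos q with rfl | hq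
  · simp [distNearestInt]
  set r := round ((j + e) / q)
  have hsub : (j + e) / q - r = (((j - q * r : ℤ) : ℝ) + e) / q := by
    push_cast
    field_simp
    ring
  rw [distNearestInt, hsub, abs_div, Nat.abs_cast]
  gcongr
  exact h _ (by simp)

lemma one_sub_goldenConj_pow_four_le_abs {n : ℕ} (hn : 1 ≤ n) (k : ℤ)
    (hk : (k : ZMod 5) = -3 ^ n) : 1 - ψ ^ 4 ≤ |k + ψ ^ n| := by
  have hψ4 : 0 ≤ ψ ^ 4 := Even.pow_nonneg (by decide) _
  have hψn := abs_le.1 (abs_goldenConj_pow_le_one n)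
  rcases (by omega : k ≤ -2 ∨ k = -1 ∨ k = 0 ∨ k = 1 ∨ 2 ≤ k) with hk2 | rfl | rfl | rfl | hk2
  · have : (k : ℝ) ≤ -2 := by exact_mod_cast hk2
    rw [abs_of_neg (by linarith)]; linarith
  · obtain ⟨q, rfl⟩ := three_pow_zmod_five_eq_one_iff.1 (by simpa using hk.symm)
    have : ψ ^ (4 * q) ≤ ψ ^ 4 := by
      rw [pow_mul]
      exact pow_le_of_le_one hψ4 ((le_abs_self _).trans (abs_goldenConj_pow_le_one 4)) (by omega)
    rw [abs_of_nonpos (by push_cast; linarith)]; push_cast; linarith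
  · exact absurd (by simpa using hk.symm) (three_pow_zmod_five_ne_zero n)
  · have := (even_of_neg_three_pow_zmod_five_eq_one (by simpa using hk.symm)).pow_nonneg ψ
    rw [abs_of_nonneg (by push_cast; linarith)]; push_cast; linarith
  · have : (2 : ℝ) ≤ k := by exact_mod_cast hk2
    rw [abs_of_pos (by linarith)]; linarith

lemma phi_sub_one_div_phi_add_two_le_distNearestInt {n : ℕ} (hn : 1 ≤ n) :
    (φ - 1) / (φ + 2) ≤ distNearestInt (Nat.fib n * (1 / (φ + 2))) := by
  rw [phi_sub_one_div_phi_add_two, fib_mul_one_div_phi_add_two]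
  exact_mod_cast le_distNearestInt_int_add_div (q := 5) _ _ _ fun k hk =>
    one_sub_goldenConj_pow_four_le_abs hn k (hk.trans (three_mul_fib_sub_fib_succ_zmod_five n))

lemma distNearestInt_fib_four_mul_one_div_phi_add_two_le :
    distNearestInt (Nat.fib 4 * (1 / (φ + 2))) ≤ (φ - 1) / (φ + 2) := by
  have hψ4 := (abs_le.1 (abs_goldenConj_pow_le_one 4)).2
  calc distNearestInt (Nat.fib 4 * (1 / (φ + 2)))
      ≤ |Nat.fib 4 * (1 / (φ + 2)) - ((1 : ℤ) : ℝ)| := round_le _ 1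
    _ = (φ - 1) / (φ + 2) := by
      rw [phi_sub_one_div_phi_add_two, fib_mul_one_div_phi_add_two, abs_of_nonpos]
      · norm_num [Nat.fib_add_two]; ring
      · norm_num [Nat.fib_add_two]; linarith

theorem min_fib_alpha1 (N : ℕ) (hN : 4 ≤ N) :
    (Finset.Icc 1 N).inf' (Finset.nonempty_Icc.mpr (by omega))
      (fun n => distNearestInt ((Nat.fib n : ℝ) * (1 / (φ + 2)))) = (φ - 1) / (φ + 2) := by
  apply le_antisymm
  · exact (Finset.inf'_le _ (Finset.mem_Icc.2 ⟨by norm_num, hN⟩)).trans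
      distNearestInt_fib_four_mul_one_div_phi_add_two_le
  · exact Finset.le_inf' _ _ fun n hn =>
      phi_sub_one_div_phi_add_two_le_distNearestInt (Finset.mem_Icc.1 hn).1
end

section
/- Consider all real sequences (G_n)_{n≥1} satisfying G_n = G_{n-1} + G_{n-2} for n ≥ 3 (equivalently, all choices of real G_1, G_2). Then: the supremum over such sequences of min_{n=1,2} ‖G_n‖ equals 1/2; the supremum of min_{n=1,2,3} ‖G_n‖ equals 1/3; the supremum of min_{n=1,2,3,4} ‖G_n‖ equals 1/4; and the supremum of min_{n=1,...,5} ‖G_n‖ equals 1/4. Each of these suprema is attained. -/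
/-!
Write `‖x‖` for the distance to the nearest integer. Shifting by `1/2` reflects it,
`‖x + 1/2‖ = 1/2 - ‖x‖`, so combined with subadditivity it gives
`‖a‖ + ‖b‖ + ‖a + b‖ ≤ 1`, hence `min (‖G₁‖, ‖G₂‖, ‖G₃‖) ≤ 1/3`.
Similarly, `‖u - v‖ + ‖u + v‖ ≤ 2 max (‖u‖, ‖v‖)` applied to
`u = G₃ + 1/2`, `v = G₂ + 1/2` gives `‖G₁‖ + ‖G₄‖ + 2 min (‖G₂‖, ‖G₃‖) ≤ 1`,
hence the bound `1/4` for four (or five) terms.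
The bounds are attained by `G = F / c` for `c = 2, 3, 4`, where `F` is the Fibonacci
sequence: no `F n` with `n ≤ 5` is divisible by `c`, so every `‖F n / c‖ ≥ 1/c`.
-/

lemma distNearestInt_le_abs_sub (x : ℝ) (m : ℤ) : distNearestInt x ≤ |x - m| :=
  round_le x m

lemma distNearestInt_le_half (x : ℝ) : distNearestInt x ≤ 1 / 2 :=
  abs_sub_round x

lemma distNearestInt_add_intCast (x : ℝ) (k : ℤ) :
    distNearestInt (x + k) = distNearestInt x := by
  unfold distNearestInt
  rw [round_add_intCast, Int.cast_add, add_sub_add_right_eq_sub]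

lemma distNearestInt_neg_le (x : ℝ) : distNearestInt (-x) ≤ distNearestInt x := by
  simpa [distNearestInt, neg_add_eq_sub, abs_sub_comm] using
    distNearestInt_le_abs_sub (-x) (-round x)

lemma distNearestInt_neg (x : ℝ) : distNearestInt (-x) = distNearestInt x :=
  le_antisymm (distNearestInt_neg_le x) (by simpa using distNearestInt_neg_le (-x))

lemma distNearestInt_add_le (a b : ℝ) :
    distNearestInt (a + b) ≤ distNearestInt a + distNearestInt b :=
  calc distNearestInt (a + b) ≤ |(a - round a) + (b - round b)| := by
        simpa [add_sub_add_comm] using distNearestInt_le_abs_sub (a + b) (round a + round b)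
    _ ≤ distNearestInt a + distNearestInt b := abs_add_le _ _

lemma distNearestInt_add_half_le (x : ℝ) :
    distNearestInt (x + 1 / 2) ≤ 1 / 2 - distNearestInt x := by
  have hx : |x - round x| ≤ 1 / 2 := abs_sub_round x
  rcases le_total 0 (x - round x) with hp | hp
  · calc distNearestInt (x + 1 / 2) ≤ |x + 1 / 2 - ↑(round x + 1)| :=
        distNearestInt_le_abs_sub _ _
      _ = 1 / 2 - |x - round x| := by
        rw [abs_of_nonneg hp] at hx ⊢
        rw [abs_of_nonpos (by push_cast; linarith)]; push_cast; ring
  · calc distNearestInt (x + 1 / 2) ≤ |x + 1 / 2 - ↑(round x)| := distNearestInt_le_abs_sub _ _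
      _ = 1 / 2 - |x - round x| := by
        rw [abs_of_nonpos hp] at hx ⊢
        rw [abs_of_nonneg (by linarith)]; ring

lemma le_distNearestInt_intCast_div {k c : ℤ} (hc : 0 < c) (hk : ¬ c ∣ k) :
    1 / (c : ℝ) ≤ distNearestInt (k / c) := by
  have hc' : (0 : ℝ) < c := by exact_mod_cast hc
  set m := round ((k : ℝ) / c)
  have hne : k - m * c ≠ 0 := fun h => hk ⟨m, by linarith⟩
  have hone : (1 : ℝ) ≤ |((k - m * c : ℤ) : ℝ)| := by exact_mod_cast Int.one_le_abs hne
  calc 1 / (c : ℝ) ≤ |((k - m * c : ℤ) : ℝ)| / c := by gcongr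
    _ = |(k : ℝ) / c - m| := by
      rw [← abs_of_pos hc', ← abs_div, abs_of_pos hc']; push_cast; field_simp

lemma distNearestInt_half : distNearestInt (1 / 2) = 1 / 2 :=
  le_antisymm (distNearestInt_le_half _) <| by
    simpa using le_distNearestInt_intCast_div (k := 1) (c := 2) (by norm_num) (by decide)

lemma distNearestInt_add_half (x : ℝ) :
    distNearestInt (x + 1 / 2) = 1 / 2 - distNearestInt x := by
  have h := distNearestInt_add_le (x + 1 / 2) (-x)
  rw [add_neg_cancel_comm, distNearestInt_neg, distNearestInt_half] at h
  linarith [distNearestInt_add_half_le x]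

lemma distNearestInt_add_add_le_one (a b : ℝ) :
    distNearestInt a + distNearestInt b + distNearestInt (a + b) ≤ 1 := by
  have h : a + b = (a + 1 / 2) + (b + 1 / 2) + ((-1 : ℤ) : ℝ) := by push_cast; ring
  have := distNearestInt_add_le (a + 1 / 2) (b + 1 / 2)
  rw [distNearestInt_add_half, distNearestInt_add_half] at this
  rw [h, distNearestInt_add_intCast]
  linarith

lemma distNearestInt_sub_add_distNearestInt_add_le (u v : ℝ) :
    distNearestInt (u - v) + distNearestInt (u + v) ≤
      2 * max (distNearestInt u) (distNearestInt v) := by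
  set p := u - round u
  set q := v - round v
  have hsub : distNearestInt (u - v) ≤ |p - q| := by
    simpa [p, q, sub_sub_sub_comm] using distNearestInt_le_abs_sub (u - v) (round u - round v)
  have hadd : distNearestInt (u + v) ≤ |p + q| := by
    simpa [p, q, add_sub_add_comm] using distNearestInt_le_abs_sub (u + v) (round u + round v)
  have hp : |p| ≤ max |p| |q| := le_max_left _ _
  have hq : |q| ≤ max |p| |q| := le_max_right _ _
  have hmax : |p - q| + |p + q| ≤ 2 * max |p| |q| := by
    rcases abs_cases (p - q) with ⟨h₁, -⟩ | ⟨h₁, -⟩ <;>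
      rcases abs_cases (p + q) with ⟨h₂, -⟩ | ⟨h₂, -⟩ <;>
      linarith [le_abs_self p, neg_abs_le p, le_abs_self q, neg_abs_le q]
  exact (add_le_add hsub hadd).trans hmax

lemma distNearestInt_add_two_mul_add_le_one (a b : ℝ) :
    distNearestInt a + distNearestInt (a + 2 * b) +
      2 * min (distNearestInt b) (distNearestInt (a + b)) ≤ 1 := by
  have h := distNearestInt_sub_add_distNearestInt_add_le (a + b + 1 / 2) (b + 1 / 2)
  have h₁ : a + b + 1 / 2 - (b + 1 / 2) = a := by ring
  have h₂ : a + b + 1 / 2 + (b + 1 / 2) = a + 2 * b + ((1 : ℤ) : ℝ) := by push_cast; ring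
  rw [h₁, h₂, distNearestInt_add_intCast, distNearestInt_add_half, distNearestInt_add_half,
    max_sub_sub_left, min_comm] at h
  linarith

def IsFibLike (G : ℕ → ℝ) : Prop := ∀ n, 3 ≤ n → G n = G (n - 1) + G (n - 2)

namespace IsFibLike

variable {G : ℕ → ℝ}

lemma apply_three (hG : IsFibLike G) : G 3 = G 1 + G 2 := by
  simpa [add_comm] using hG 3 le_rfl

lemma apply_four (hG : IsFibLike G) : G 4 = G 1 + 2 * G 2 := by
  have := hG 4 (by norm_num)
  norm_num at this
  rw [this, hG.apply_three]; ring

lemma exists_le_third (hG : IsFibLike G) :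
    ∃ n ∈ Finset.Icc 1 3, distNearestInt (G n) ≤ 1 / 3 := by
  by_contra! h
  have := distNearestInt_add_add_le_one (G 1) (G 2)
  rw [← hG.apply_three] at this
  linarith [h 1 (by decide), h 2 (by decide), h 3 (by decide)]

lemma exists_le_quarter (hG : IsFibLike G) :
    ∃ n ∈ Finset.Icc 1 4, distNearestInt (G n) ≤ 1 / 4 := by
  by_contra! h
  have := distNearestInt_add_two_mul_add_le_one (G 1) (G 2)
  rw [← hG.apply_three, ← hG.apply_four] at this
  have := lt_min (h 2 (by decide)) (h 3 (by decide))
  linarith [h 1 (by decide), h 4 (by decide)]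

end IsFibLike

lemma isFibLike_fib_div (c : ℝ) : IsFibLike (fun n => (Nat.fib n : ℝ) / c) := by
  rintro n hn
  obtain ⟨m, rfl⟩ : ∃ m, n = m + 3 := ⟨n - 3, by omega⟩
  simp only [show m + 3 - 1 = m + 2 by omega, show m + 3 - 2 = m + 1 by omega,
    Nat.fib_add_two, Nat.cast_add, add_div]
  ring

lemma isGreatest_of_forall_exists_le {N : ℕ} (hN : 1 ≤ N) {v : ℝ} {G₀ : ℕ → ℝ}
    (hG₀ : IsFibLike G₀) (hv₁ : distNearestInt (G₀ 1) = v)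
    (hv : ∀ n ∈ Finset.Icc 1 N, v ≤ distNearestInt (G₀ n))
    (hle : ∀ G, IsFibLike G → ∃ n ∈ Finset.Icc 1 N, distNearestInt (G n) ≤ v) :
    IsGreatest {y : ℝ | ∃ G : ℕ → ℝ, IsFibLike G ∧
      y = (Finset.Icc 1 N).inf' (Finset.nonempty_Icc.mpr hN) (fun n => distNearestInt (G n))}
      v := by
  refine ⟨⟨G₀, hG₀, le_antisymm (Finset.le_inf' _ _ hv) ?_⟩, ?_⟩
  · exact Finset.inf'_le_of_le _ (Finset.mem_Icc.mpr ⟨le_rfl, hN⟩) hv₁.le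
  · rintro _ ⟨G, hG, rfl⟩
    obtain ⟨n, hn, hGn⟩ := hle G hG
    exact (Finset.inf'_le _ hn).trans hGn

lemma isGreatest_one_div_of_not_dvd_fib {N c : ℕ} (hN : 1 ≤ N) (hc : 0 < c)
    (hdvd : ∀ n ∈ Finset.Icc 1 N, ¬ c ∣ Nat.fib n)
    (hle : ∀ G, IsFibLike G → ∃ n ∈ Finset.Icc 1 N, distNearestInt (G n) ≤ 1 / c) :
    IsGreatest {y : ℝ | ∃ G : ℕ → ℝ, IsFibLike G ∧
      y = (Finset.Icc 1 N).inf' (Finset.nonempty_Icc.mpr hN) (fun n => distNearestInt (G n))}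
      (1 / c) := by
  have hc₀ : (0 : ℤ) < c := by exact_mod_cast hc
  have hge (n : ℕ) (hn : n ∈ Finset.Icc 1 N) :
      1 / (c : ℝ) ≤ distNearestInt (Nat.fib n / c) := by
    simpa only [Int.cast_natCast] using
      le_distNearestInt_intCast_div hc₀ (k := Nat.fib n) (by exact_mod_cast hdvd n hn)
  refine isGreatest_of_forall_exists_le hN (isFibLike_fib_div c) (le_antisymm ?_ ?_) hge hle
  · simpa using distNearestInt_le_abs_sub ((1 : ℝ) / c) 0
  · simpa using hge 1 (Finset.mem_Icc.mpr ⟨le_rfl, hN⟩)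

theorem fib_like_min_small_cases :
    IsGreatest {y : ℝ | ∃ G : ℕ → ℝ, (∀ n, 3 ≤ n → G n = G (n - 1) + G (n - 2)) ∧
      y = (Finset.Icc 1 2).inf' (Finset.nonempty_Icc.mpr (by omega))
            (fun n => distNearestInt (G n))} (1 / 2) ∧
    IsGreatest {y : ℝ | ∃ G : ℕ → ℝ, (∀ n, 3 ≤ n → G n = G (n - 1) + G (n - 2)) ∧
      y = (Finset.Icc 1 3).inf' (Finset.nonempty_Icc.mpr (by omega))
            (fun n => distNearestInt (G n))} (1 / 3) ∧
    IsGreatest {y : ℝ | ∃ G : ℕ → ℝ, (∀ n, 3 ≤ n → G n = G (n - 1) + G (n - 2)) ∧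
      y = (Finset.Icc 1 4).inf' (Finset.nonempty_Icc.mpr (by omega))
            (fun n => distNearestInt (G n))} (1 / 4) ∧
    IsGreatest {y : ℝ | ∃ G : ℕ → ℝ, (∀ n, 3 ≤ n → G n = G (n - 1) + G (n - 2)) ∧
      y = (Finset.Icc 1 5).inf' (Finset.nonempty_Icc.mpr (by omega))
            (fun n => distNearestInt (G n))} (1 / 4) := by
  refine ⟨?_, ?_, ?_, ?_⟩ <;> simp only [← Nat.cast_ofNat (R := ℝ)]
  · exact isGreatest_one_div_of_not_dvd_fib (c := 2) (by norm_num) (by norm_num) (by decide)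
      fun G _ => ⟨1, by decide, distNearestInt_le_half _⟩
  · exact isGreatest_one_div_of_not_dvd_fib (c := 3) (by norm_num) (by norm_num) (by decide)
      fun G hG => hG.exists_le_third
  · exact isGreatest_one_div_of_not_dvd_fib (c := 4) (by norm_num) (by norm_num) (by decide)
      fun G hG => hG.exists_le_quarter
  · refine isGreatest_one_div_of_not_dvd_fib (c := 4) (by norm_num) (by norm_num) (by decide)
      fun G hG => ?_
    obtain ⟨n, hn, hGn⟩ := hG.exists_le_quarter
    exact ⟨n, Finset.Icc_subset_Icc_right (by norm_num) hn, hGn⟩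
end

section
/- For every positive integer n, T_n is the nearest integer to F_n/(φ+2); that is, |F_n/(φ+2) − T_n| < 1/2 and ‖F_n/(φ+2)‖ = |F_n/(φ+2) − T_n|. -/
/-- `T n = Σ_{k=1}^{⌊n/2⌋} (−1)^{k+1} F_{n−2k}`. -/
def T (n : ℕ) : ℤ := ∑ k ∈ Finset.Icc 1 (n / 2), (-1 : ℤ) ^ (k + 1) * (Nat.fib (n - 2 * k) : ℤ)

open Finset Real

theorem round_eq_of_abs_sub_lt_half {α : Type*} [Field α] [LinearOrder α] [IsStrictOrderedRing α]
    [FloorRing α] {x : α} {n : ℤ} (h : |x - n| < 1 / 2) : round x = n := by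
  obtain ⟨hlo, hhi⟩ := abs_sub_lt_iff.mp h
  exact round_eq_iff.mpr ⟨by linarith, by linarith⟩

namespace Real

/- `goldenRatio` and `goldenConj` are reducible, so `ring` would unfold them into `√5`;
generalizing them first lets `linear_combination` use their algebraic relations instead. -/

theorem fib_add_two_sub_goldenRatio_sq_mul_fib (n : ℕ) :
    Nat.fib (n + 2) - goldenRatio ^ 2 * Nat.fib n = goldenConj ^ n := by
  have h₁ := fib_succ_sub_goldenRatio_mul_fib (n + 1)
  have h₀ := fib_succ_sub_goldenRatio_mul_fib n
  have hsum := goldenRatio_add_goldenConj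
  generalize goldenRatio = a at *
  generalize goldenConj = b at *
  linear_combination h₁ + a * h₀ + b ^ n * hsum

theorem inv_goldenRatio_add_two : (goldenRatio + 2)⁻¹ = (1 + goldenConj ^ 2) / 5 := by
  rw [inv_eq_iff_eq_inv, inv_div, eq_div_iff (by positivity)]
  have hsum := goldenRatio_add_goldenConj
  have hprod := goldenRatio_mul_goldenConj
  have hsq := goldenConj_sq
  generalize goldenRatio = a at *
  generalize goldenConj = b at *
  linear_combination (a + 2) * hsq + 2 * hsum + hprod

theorem goldenConj_sq_lt_half : goldenConj ^ 2 < 1 / 2 := by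
  have : (2 : ℝ) < √5 := by rw [Real.lt_sqrt] <;> norm_num
  rw [goldenConj_sq, goldenConj]
  linarith

theorem abs_goldenConj_pow_le_sq {n : ℕ} (hn : 2 ≤ n) : |goldenConj ^ n| ≤ goldenConj ^ 2 := by
  rw [abs_pow, ← sq_abs]
  exact pow_le_pow_of_le_one (abs_nonneg _)
    (abs_le.mpr ⟨neg_one_lt_goldenConj.le, goldenConj_neg.le.trans zero_le_one⟩) hn

end Real

theorem φ_eq_goldenRatio : φ = goldenRatio := rfl

theorem T_add_two (n : ℕ) : T (n + 2) = Nat.fib n - T n := by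
  have hsplit : Icc 1 ((n + 2) / 2) =
      cons 1 ((Icc 1 (n / 2)).map (addRightEmbedding 1)) (by simp) := by
    ext k
    simp only [cons_eq_insert, mem_insert, map_add_right_Icc, mem_Icc]
    omega
  rw [T, T, hsplit, sum_cons, sum_map, sub_eq_add_neg, ← sum_neg_distrib]
  congr 1
  · simp
  · refine sum_congr rfl fun k _ => ?_
    simp only [addRightEmbedding_apply, show n + 2 - 2 * (k + 1) = n - 2 * k by omega]
    ring

noncomputable def roundingError (n : ℕ) : ℝ := Nat.fib n / (φ + 2) - T n

theorem roundingError_one : roundingError 1 = (φ + 2)⁻¹ := by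
  simp [roundingError, T]

theorem five_mul_roundingError_sub_goldenConj_pow_add_two (n : ℕ) :
    5 * roundingError (n + 2) - goldenConj ^ (n + 2) =
      -(5 * roundingError n - goldenConj ^ n) := by
  rw [roundingError, roundingError, div_eq_mul_inv, div_eq_mul_inv, φ_eq_goldenRatio,
    inv_goldenRatio_add_two, T_add_two]
  push_cast
  have hfib := fib_add_two_sub_goldenRatio_sq_mul_fib n
  have hsum := goldenRatio_add_goldenConj
  have hprod := goldenRatio_mul_goldenConj
  generalize goldenRatio = a at *
  generalize goldenConj = b at *
  linear_combination (1 + b ^ 2) * hfib + Nat.fib n * ((a + b + 1) * hsum + (a * b - 3) * hprod)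

theorem abs_five_mul_roundingError_sub_goldenConj_pow_le (n : ℕ) :
    |5 * roundingError n - goldenConj ^ n| ≤ 2 := by
  induction n using Nat.twoStepInduction with
  | zero => norm_num [roundingError, T]
  | one =>
    have h : 5 * roundingError 1 - goldenConj ^ 1 = 2 := by
      rw [roundingError_one, φ_eq_goldenRatio, inv_goldenRatio_add_two, goldenConj_sq]
      linear_combination -goldenRatio_add_goldenConj
    rw [h, abs_two]
  | more n ih _ => rwa [five_mul_roundingError_sub_goldenConj_pow_add_two, abs_neg]

theorem abs_roundingError_lt_half {n : ℕ} (hn : 1 ≤ n) : |roundingError n| < 1 / 2 := by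
  obtain rfl | hn2 := hn.eq_or_lt
  · have hφ : 0 < φ := goldenRatio_pos
    rw [roundingError_one, abs_of_pos (by positivity)]
    exact inv_lt_of_inv_lt₀ (by norm_num) (by linarith)
  · have h5 : |5 * roundingError n| < 5 / 2 := calc
      |5 * roundingError n| ≤ |5 * roundingError n - goldenConj ^ n| + |goldenConj ^ n| :=
        sub_le_iff_le_add.mp (abs_sub_abs_le_abs_sub _ _)
      _ < 2 + 1 / 2 := add_lt_add_of_le_of_lt (abs_five_mul_roundingError_sub_goldenConj_pow_le n)
        ((abs_goldenConj_pow_le_sq hn2).trans_lt goldenConj_sq_lt_half)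
      _ = 5 / 2 := by norm_num
    rw [abs_mul, abs_of_pos (by norm_num : (0 : ℝ) < 5)] at h5
    linarith

theorem T_nearest_int (n : ℕ) (hn : 1 ≤ n) :
    |(Nat.fib n : ℝ) / (φ + 2) - (T n : ℝ)| < 1 / 2 ∧
    distNearestInt ((Nat.fib n : ℝ) / (φ + 2)) = |(Nat.fib n : ℝ) / (φ + 2) - (T n : ℝ)| := by
  have hlt : |(Nat.fib n : ℝ) / (φ + 2) - (T n : ℝ)| < 1 / 2 := abs_roundingError_lt_half hn
  exact ⟨hlt, by rw [distNearestInt, round_eq_of_abs_sub_lt_half hlt]⟩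
end
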